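/- arXiv:1811.05077 — 2 statements merged into one kernel-verified Lean document; each statement's English description precedes it below -/
import Mathlib

section
/- The third computation stage needs only local data and received first-stage data: for every process p, if t ∈ L3 p and pred t' t, then t' ∈ L0 p ∪ L4 p ∪ L3 p ∪ ⋃_{q ≠ p} L1 q. In particular, after receiving the sets L1 q from the other processes, all of L3 p can be computed without further communication. -/
/-- The locally computable tasks: the least subset `S` of `T` such that
whenever `t ∈ Lp` and every predecessor `t'` of `t` lies in `A ∪ S`
(stated positively: every predecessor not in `A` lies in `S`),
then `t ∈ S`. Here `Lp` is the local task set and `A` the initially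
available data. -/
inductive LocComp {T : Type*} (pred : T → T → Prop) (Lp A : Set T) : T → Prop
  | step {t : T} (ht : t ∈ Lp)
      (h : ∀ t', pred t' t → t' ∉ A → LocComp pred Lp A t') : LocComp pred Lp A t

variable {T P : Type*}

/-- `L4 p`: tasks of `L p` computable from the initial data `L0 p` of `p` alone. -/
def L4 (pred : T → T → Prop) (L L0 : P → Set T) (p : P) : Set T :=
  {t | LocComp pred (L p) (L0 p) t}

/-- `L5 p`: all tasks needed, directly or indirectly, for the local result `L p`. -/
def L5 (pred : T → T → Prop) (L : P → Set T) (p : P) : Set T :=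
  {t' | ∃ t ∈ L p, Relation.ReflTransGen pred t' t}

/-- `L1 p`: locally computable tasks of `p` needed by some other process. -/
def L1 (pred : T → T → Prop) (L L0 : P → Set T) (p : P) : Set T :=
  (L4 pred L L0 p ∩ ⋃ (q) (_ : q ≠ p), L5 pred L q) \ L0 p

/-- `L2 p`: locally computable tasks used only locally. -/
def L2 (pred : T → T → Prop) (L L0 : P → Set T) (p : P) : Set T :=
  L4 pred L L0 p \ L1 pred L L0 p

/-- `L3 p`: remaining tasks needed for the local result, computed after
receiving the sets `L1 q` from other processes. -/
def L3 (pred : T → T → Prop) (L L0 : P → Set T) (p : P) : Set T :=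
  (L5 pred L p \ L4 pred L L0 p) \ ⋃ (q) (_ : q ≠ p), L1 pred L L0 q

theorem mem_L5_of_pred {pred : T → T → Prop} {L : P → Set T} {p : P} {t t' : T}
    (ht : t ∈ L5 pred L p) (h : pred t' t) : t' ∈ L5 pred L p :=
  let ⟨u, hu, htu⟩ := ht
  ⟨u, hu, htu.head h⟩

theorem L5_subset_L4_union_L3_union_L1 (pred : T → T → Prop) (L L0 : P → Set T) (p : P) :
    L5 pred L p ⊆
      L4 pred L L0 p ∪ L3 pred L L0 p ∪ ⋃ (q) (_ : q ≠ p), L1 pred L L0 q := by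
  intro t ht
  by_cases h4 : t ∈ L4 pred L L0 p
  · exact .inl (.inl h4)
  by_cases h1 : t ∈ ⋃ (q) (_ : q ≠ p), L1 pred L L0 q
  · exact .inr h1
  · exact .inl (.inr ⟨⟨ht, h4⟩, h1⟩)

theorem stmt_6 (pred : T → T → Prop) (L L0 : P → Set T) (p : P)
    (t t' : T) (ht : t ∈ L3 pred L L0 p) (h : pred t' t) :
    t' ∈ L0 p ∪ L4 pred L L0 p ∪ L3 pred L L0 p ∪
      ⋃ (q) (_ : q ≠ p), L1 pred L L0 q := by
  rcases L5_subset_L4_union_L3_union_L1 pred L L0 p (mem_L5_of_pred ht.1.1 h) with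
    (h4 | h3) | h1
  · exact .inl (.inl (.inr h4))
  · exact .inl (.inr h3)
  · exact .inr h1
end

section
/- Characterization of locally computable tasks under well-foundedness: assume the predecessor relation pred is well-founded. Then for every process p and task t, t ∈ L4 p if and only if t ∈ L p and every t' reachable from t by the reflexive-transitive closure of the restricted relation R, where R a b holds iff pred a b and a ∉ L0 p, satisfies t' ∈ L p. -/
variable {T P : Type*}

namespace LocComp

variable {pred : T → T → Prop} {Lp A : Set T} {t : T}

theorem mem (h : LocComp pred Lp A t) : t ∈ Lp := by
  cases h with
  | step ht _ => exact ht

theorem of_reflTransGen (h : LocComp pred Lp A t) {t' : T}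
    (hr : Relation.ReflTransGen (fun a b => pred a b ∧ a ∉ A) t' t) :
    LocComp pred Lp A t' := by
  induction hr using Relation.ReflTransGen.head_induction_on with
  | refl => exact h
  | head hac _ hc =>
    cases hc with
    | step _ hpred => exact hpred _ hac.1 hac.2

theorem of_forall_reflTransGen (hwf : WellFounded pred)
    (h : ∀ t', Relation.ReflTransGen (fun a b => pred a b ∧ a ∉ A) t' t → t' ∈ Lp) :
    LocComp pred Lp A t := by
  induction t using hwf.induction with
  | _ t ih =>
    refine step (h t .refl) fun t' hpred hA => ih t' hpred fun s hs => h s ?_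
    exact hs.tail ⟨hpred, hA⟩

theorem iff_forall_reflTransGen (hwf : WellFounded pred) :
    LocComp pred Lp A t ↔
      ∀ t', Relation.ReflTransGen (fun a b => pred a b ∧ a ∉ A) t' t → t' ∈ Lp :=
  ⟨fun h _ hr => (h.of_reflTransGen hr).mem, of_forall_reflTransGen hwf⟩

end LocComp

theorem stmt_14 (pred : T → T → Prop) (L L0 : P → Set T)
    (hwf : WellFounded pred) (p : P) (t : T) :
    t ∈ L4 pred L L0 p ↔
      t ∈ L p ∧ ∀ t',
        Relation.ReflTransGen (fun a b => pred a b ∧ a ∉ L0 p) t' t →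
          t' ∈ L p := by
  change LocComp pred (L p) (L0 p) t ↔ _
  rw [LocComp.iff_forall_reflTransGen hwf]
  exact ⟨fun h => ⟨h t .refl, h⟩, And.right⟩
end
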